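/- Let N ≥ 1 and let Ω ⊆ EuclideanSpace ℝ (Fin N) be open. There is a constant c > 0 depending only on N with the following property: if v : EuclideanSpace ℝ (Fin N) → ℝ is C² on Ω with v(x) < 0 and Δv(x) ≥ 0 for every x ∈ Ω, and if z ∈ Ω and r > 0 are such that the closed ball of center z and radius r is contained in Ω, then ∫_{Metric.ball z (r/2)} |∇v(x)|²/v(x)² dx ≤ c·r^(N-2). -/

import Mathlib

open MeasureTheory

/-- The Laplacian `Δu(x) = ∑ i, ∂²u/∂xᵢ²(x)` of `u : ℝ^N → ℝ`. -/
noncomputable def lap {N : ℕ} (u : EuclideanSpace ℝ (Fin N) → ℝ)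
    (x : EuclideanSpace ℝ (Fin N)) : ℝ :=
  ∑ i : Fin N, fderiv ℝ (fun y => fderiv ℝ u y (EuclideanSpace.single i 1)) x
    (EuclideanSpace.single i 1)

/-!
Testing `Δv ≥ 0` against `φ = ζ² / (-v)` and integrating by parts gives `∫ ∇φ · ∇v ≤ 0`.
Pointwise `∇φ · ∇v = |q|² - 2 q · ∇ζ` with `q = ζ ∇v / v`, hence `|q|² / 2 - 2 |∇ζ|² ≤ ∇φ · ∇v`
and `∫ ζ² |∇v|² / v² ≤ 4 ∫ |∇ζ|²`. For a cutoff `ζ` equal to `1` on `B(z, r/2)`, supported in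
`B(z, r)` and with `|∇ζ| ≤ K / r`, the right-hand side is at most `4 K² |B(0, 1)| r ^ (N - 2)`.
-/

open Metric InnerProductSpace

lemma ContDiffOn.contDiff_of_tsupport_subset {𝕜 E F : Type*} [NontriviallyNormedField 𝕜]
    [NormedAddCommGroup E] [NormedSpace 𝕜 E] [NormedAddCommGroup F] [NormedSpace 𝕜 F]
    {n : WithTop ℕ∞} {f : E → F} {s : Set E}
    (hf : ContDiffOn 𝕜 n f s) (hs : IsOpen s) (hfs : tsupport f ⊆ s) : ContDiff 𝕜 n f :=
  contDiff_iff_contDiffAt.2 fun x => by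
    by_cases hx : x ∈ s
    · exact hf.contDiffAt (hs.mem_nhds hx)
    · exact contDiffAt_const.congr_of_eventuallyEq
        (notMem_tsupport_iff_eventuallyEq.1 fun h => hx (hfs h))

lemma tsupport_sq_mul_subset {X : Type*} [TopologicalSpace X] (f g : X → ℝ) :
    tsupport (fun x => f x ^ 2 * g x) ⊆ tsupport f :=
  closure_mono <| Function.support_subset_iff'.2 fun x hx => by
    simp [Function.notMem_support.1 hx]

lemma integrable_mul_of_tsupport_subset {X : Type*} [TopologicalSpace X] [MeasurableSpace X]
    [OpensMeasurableSpace X] {μ : Measure X} [IsFiniteMeasureOnCompacts μ] {f g : X → ℝ}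
    {s : Set X} (hs : IsOpen s) (hf : Continuous f) (hfc : HasCompactSupport f)
    (hfs : tsupport f ⊆ s) (hg : ContinuousOn g s) : Integrable (fun x => f x * g x) μ :=
  ((hf.continuousOn.mul hg).continuous_of_tsupport_subset hs
    (tsupport_mul_subset_left.trans hfs)).integrable_of_hasCompactSupport hfc.mul_right

section Integration

variable {E : Type*} [NormedAddCommGroup E] [NormedSpace ℝ E] [MeasurableSpace E] [BorelSpace E]
  {f g : E → ℝ} {s : Set E}

lemma integrable_fderiv_apply_mul_of_tsupport_subset {μ : Measure E} [IsFiniteMeasureOnCompacts μ]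
    (hs : IsOpen s) (hf : ContDiff ℝ 1 f) (hfc : HasCompactSupport f) (hfs : tsupport f ⊆ s)
    (hg : ContinuousOn g s) (w : E) : Integrable (fun x => fderiv ℝ f x w * g x) μ :=
  integrable_mul_of_tsupport_subset hs
    ((hf.continuous_fderiv one_ne_zero).clm_apply continuous_const) (hfc.fderiv_apply ℝ w)
    ((tsupport_fderiv_apply_subset ℝ w).trans hfs) hg

lemma integrable_norm_fderiv_sq {μ : Measure E} [IsFiniteMeasureOnCompacts μ]
    (hf : ContDiff ℝ 1 f) (hfc : HasCompactSupport f) :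
    Integrable (fun x => ‖fderiv ℝ f x‖ ^ 2) μ := by
  have hcont : Continuous fun x => ‖fderiv ℝ f x‖ ^ 2 :=
    (hf.continuous_fderiv one_ne_zero).norm.pow 2
  exact hcont.integrable_of_hasCompactSupport
    ((hfc.fderiv ℝ).norm.comp_left (g := fun t : ℝ => t ^ 2) (by norm_num))

lemma integrable_sq_mul_norm_fderiv_div_sq {μ : Measure E} [IsFiniteMeasureOnCompacts μ]
    {ζ v : E → ℝ} (hs : IsOpen s) (hζ : Continuous ζ) (hζc : HasCompactSupport ζ)
    (hζs : tsupport ζ ⊆ s) (hv : ContDiffOn ℝ 1 v s) (hv0 : ∀ x ∈ s, v x ≠ 0) :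
    Integrable (fun x => ζ x ^ 2 * (‖fderiv ℝ v x‖ ^ 2 / v x ^ 2)) μ :=
  integrable_mul_of_tsupport_subset hs (hζ.pow 2)
    (hζc.comp_left (g := fun t : ℝ => t ^ 2) (by norm_num))
    ((tsupport_comp_subset (g := fun t : ℝ => t ^ 2) (by norm_num) ζ).trans hζs)
    (((hv.continuousOn_fderiv_of_isOpen hs le_rfl).norm.pow 2).div (hv.continuousOn.pow 2)
      fun x hx => pow_ne_zero 2 (hv0 x hx))

theorem integral_mul_fderiv_eq_neg_fderiv_mul_of_tsupport_subset [FiniteDimensional ℝ E]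
    {μ : Measure E} [μ.IsAddHaarMeasure] (hs : IsOpen s) (hf : ContDiff ℝ 1 f)
    (hfc : HasCompactSupport f) (hfs : tsupport f ⊆ s) (hg : ContDiffOn ℝ 1 g s) (w : E) :
    ∫ x, f x * fderiv ℝ g x w ∂μ = -∫ x, fderiv ℝ f x w * g x ∂μ :=
  integral_mul_fderiv_eq_neg_fderiv_mul_of_integrable
    (integrable_fderiv_apply_mul_of_tsupport_subset hs hf hfc hfs hg.continuousOn w)
    (integrable_mul_of_tsupport_subset hs hf.continuous hfc hfs
      ((hg.continuousOn_fderiv_of_isOpen hs le_rfl).clm_apply continuousOn_const))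
    (integrable_mul_of_tsupport_subset hs hf.continuous hfc hfs hg.continuousOn)
    (fun x _ => hf.differentiable one_ne_zero x)
    (fun x hx => (hg.differentiableOn one_ne_zero x (hfs hx)).differentiableAt
      (hs.mem_nhds (hfs hx)))

end Integration

lemma EuclideanSpace.sum_sq_apply_single {ι : Type*} [Fintype ι] [DecidableEq ι]
    (L : EuclideanSpace ℝ ι →L[ℝ] ℝ) :
    ∑ i, L (EuclideanSpace.single i 1) ^ 2 = ‖L‖ ^ 2 := by
  obtain ⟨y, rfl⟩ := (toDual ℝ (EuclideanSpace ℝ ι)).surjective L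
  rw [(toDual ℝ _).norm_map, EuclideanSpace.real_norm_sq_eq]
  simp [EuclideanSpace.inner_single_right]

lemma norm_gradient {F : Type*} [NormedAddCommGroup F] [InnerProductSpace ℝ F] [CompleteSpace F]
    (f : F → ℝ) (x : F) : ‖gradient f x‖ = ‖fderiv ℝ f x‖ :=
  (toDual ℝ F).symm.norm_map _

lemma le_fderiv_sq_mul_inv_neg_mul_fderiv {E : Type*} [NormedAddCommGroup E] [NormedSpace ℝ E]
    {ζ v : E → ℝ} {x : E} (hζ : DifferentiableAt ℝ ζ x)
    (hv : DifferentiableAt ℝ v x) (hvx : v x ≠ 0) (w : E) :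
    (ζ x * fderiv ℝ v x w / v x) ^ 2 / 2 - 2 * fderiv ℝ ζ x w ^ 2 ≤
      fderiv ℝ (fun y => ζ y ^ 2 * (-v y)⁻¹) x w * fderiv ℝ v x w := by
  have hφ : HasFDerivAt (fun y => ζ y ^ 2 * (-v y)⁻¹) _ x := (hζ.hasFDerivAt.pow 2).mul
    ((hasFDerivAt_inv (neg_ne_zero.2 hvx)).comp x hv.hasFDerivAt.neg)
  set Q := ζ x * fderiv ℝ v x w / v x
  set b := fderiv ℝ ζ x w
  have key :
      fderiv ℝ (fun y => ζ y ^ 2 * (-v y)⁻¹) x w * fderiv ℝ v x w = Q ^ 2 - 2 * Q * b := by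
    rw [hφ.fderiv]
    simp only [even_two, Even.neg_pow, ContinuousLinearMap.comp_neg, smul_neg, inv_neg,
      Nat.add_one_sub_one, pow_one, nsmul_eq_mul, Nat.cast_ofNat, neg_smul, add_apply, neg_apply,
      smul_apply, ContinuousLinearMap.comp_apply, ContinuousLinearMap.toSpanSingleton_apply, smul_eq_mul, mul_neg, neg_neg, Q, b]
    field_simp
    ring
  nlinarith [sq_nonneg (Q - 2 * b)]

lemma le_sum_fderiv_sq_mul_inv_neg_mul_fderiv {N : ℕ} {ζ v : EuclideanSpace ℝ (Fin N) → ℝ}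
    {x : EuclideanSpace ℝ (Fin N)} (hζ : DifferentiableAt ℝ ζ x) (hv : DifferentiableAt ℝ v x)
    (hvx : v x ≠ 0) :
    ζ x ^ 2 * (‖fderiv ℝ v x‖ ^ 2 / v x ^ 2) / 2 - 2 * ‖fderiv ℝ ζ x‖ ^ 2 ≤
      ∑ i, fderiv ℝ (fun y => ζ y ^ 2 * (-v y)⁻¹) x (EuclideanSpace.single i 1) *
        fderiv ℝ v x (EuclideanSpace.single i 1) := by
  have hsum : ∑ i, (ζ x * fderiv ℝ v x (EuclideanSpace.single i 1) / v x) ^ 2 =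
      ζ x ^ 2 * (‖fderiv ℝ v x‖ ^ 2 / v x ^ 2) := by
    simp_rw [div_pow, mul_pow, ← Finset.sum_div, ← Finset.mul_sum,
      EuclideanSpace.sum_sq_apply_single]
    ring
  have := Finset.sum_le_sum fun i (_ : i ∈ Finset.univ) =>
    le_fderiv_sq_mul_inv_neg_mul_fderiv hζ hv hvx (EuclideanSpace.single i 1)
  rwa [Finset.sum_sub_distrib, ← Finset.sum_div, ← Finset.mul_sum, hsum,
    EuclideanSpace.sum_sq_apply_single] at this

section Cutoff

variable {E : Type*} [NormedAddCommGroup E] [NormedSpace ℝ E] {z x : E} {r : ℝ}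

lemma norm_inv_smul_sub (hr : 0 < r) : ‖r⁻¹ • (x - z)‖ = dist x z / r := by
  rw [norm_smul, norm_inv, Real.norm_of_nonneg hr.le, dist_eq_norm, inv_mul_eq_div]

variable [FiniteDimensional ℝ E]

variable (E) in
noncomputable def cutoffProfile : ContDiffBump (0 : E) :=
  ⟨1 / 2, 3 / 4, by norm_num, by norm_num⟩

noncomputable def cutoff (z : E) (r : ℝ) (x : E) : ℝ :=
  cutoffProfile E (r⁻¹ • (x - z))

lemma contDiff_cutoff {n : ℕ∞} : ContDiff ℝ n (cutoff z r) :=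
  (cutoffProfile E).contDiff.comp ((contDiff_id.sub contDiff_const).const_smul r⁻¹)

lemma cutoff_of_dist_le (hr : 0 < r) (hx : dist x z ≤ r / 2) : cutoff z r x = 1 :=
  (cutoffProfile E).one_of_mem_closedBall <| by
    rw [mem_closedBall, dist_zero_right, norm_inv_smul_sub hr, div_le_iff₀ hr]
    change dist x z ≤ 1 / 2 * r
    linarith

lemma tsupport_cutoff_subset (hr : 0 < r) :
    tsupport (cutoff z r) ⊆ closedBall z (3 / 4 * r) := by
  refine closure_minimal (fun x hx => ?_) isClosed_closedBall
  have hx : r⁻¹ • (x - z) ∈ ball (0 : E) (3 / 4) := (cutoffProfile E).support_eq ▸ hx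
  rw [mem_ball, dist_zero_right, norm_inv_smul_sub hr, div_lt_iff₀ hr] at hx
  exact mem_closedBall.2 hx.le

lemma hasCompactSupport_cutoff (hr : 0 < r) : HasCompactSupport (cutoff z r) :=
  (isCompact_closedBall z _).of_isClosed_subset (isClosed_tsupport _) (tsupport_cutoff_subset hr)

lemma exists_norm_fderiv_cutoff_le : ∃ K > 0, ∀ (z : E) (r : ℝ) (x : E), 0 < r →
    ‖fderiv ℝ (cutoff z r) x‖ ≤ K / r := by
  obtain ⟨K, hK⟩ : ∃ K, ∀ y, ‖fderiv ℝ (cutoffProfile E) y‖ ≤ K :=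
    ((cutoffProfile E).hasCompactSupport.fderiv ℝ).exists_bound_of_continuous
      (((cutoffProfile E).contDiff (n := 1)).continuous_fderiv one_ne_zero)
  refine ⟨max K 1, by positivity, fun z r x hr => ?_⟩
  have hT : HasFDerivAt (fun y => r⁻¹ • (y - z)) (r⁻¹ • ContinuousLinearMap.id ℝ E) x :=
    ((hasFDerivAt_id x).sub_const z).const_smul r⁻¹
  have hψ := ((cutoffProfile E).contDiff (n := 1)).differentiable one_ne_zero (r⁻¹ • (x - z))
  have hζ : HasFDerivAt (cutoff z r)
      ((fderiv ℝ (cutoffProfile E) (r⁻¹ • (x - z))).comp (r⁻¹ • ContinuousLinearMap.id ℝ E)) x :=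
    hψ.hasFDerivAt.comp x hT
  rw [hζ.fderiv, div_eq_mul_inv]
  calc _ ≤ ‖fderiv ℝ (cutoffProfile E) (r⁻¹ • (x - z))‖ * ‖r⁻¹ • ContinuousLinearMap.id ℝ E‖ :=
        ContinuousLinearMap.opNorm_comp_le _ _
    _ ≤ max K 1 * r⁻¹ := by
        gcongr
        · exact (hK _).trans (le_max_left _ _)
        · rw [norm_smul, norm_inv, Real.norm_of_nonneg hr.le]
          exact mul_le_of_le_one_right (by positivity) ContinuousLinearMap.norm_id_le

lemma exists_integral_norm_fderiv_cutoff_sq_le [MeasurableSpace E] [BorelSpace E]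
    (μ : Measure E) [μ.IsAddHaarMeasure] :
    ∃ C > 0, ∀ (z : E) (r : ℝ), 0 < r →
      ∫ x, ‖fderiv ℝ (cutoff z r) x‖ ^ 2 ∂μ ≤ C * r ^ ((Module.finrank ℝ E : ℝ) - 2) := by
  obtain ⟨K, hK, hbound⟩ := exists_norm_fderiv_cutoff_le (E := E)
  have hB : 0 < μ.real (closedBall 0 1) :=
    ENNReal.toReal_pos (measure_closedBall_pos μ 0 one_pos).ne' measure_closedBall_lt_top.ne
  refine ⟨K ^ 2 * μ.real (closedBall 0 1), by positivity, fun z r hr => ?_⟩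
  have hzero : ∀ x ∉ closedBall z r, ‖fderiv ℝ (cutoff z r) x‖ ^ 2 = 0 := fun x hx => by
    have hx' : x ∉ tsupport (cutoff z r) := fun h =>
      hx (closedBall_subset_closedBall (by linarith) (tsupport_cutoff_subset hr h))
    simp [fderiv_of_notMem_tsupport ℝ hx']
  rw [← setIntegral_eq_integral_of_forall_compl_eq_zero hzero]
  calc _ ≤ (K / r) ^ 2 * μ.real (closedBall z r) := by
        refine (Real.le_norm_self _).trans (norm_setIntegral_le_of_norm_le_const
          measure_closedBall_lt_top fun x _ => ?_)
        rw [norm_pow, norm_norm]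
        gcongr
        exact hbound z r x hr
    _ = _ := by
        rw [Measure.addHaar_real_closedBall' μ z hr.le, Real.rpow_sub hr, Real.rpow_natCast,
          Real.rpow_two]
        field_simp

end Cutoff

section Subharmonic

variable {N : ℕ} {Ω : Set (EuclideanSpace ℝ (Fin N))} {v φ ζ : EuclideanSpace ℝ (Fin N) → ℝ}

theorem integral_sum_fderiv_mul_fderiv_nonpos (hΩ : IsOpen Ω) (hv : ContDiffOn ℝ 2 v Ω)
    (hsub : ∀ x ∈ Ω, 0 ≤ lap v x) (hφ : ContDiff ℝ 1 φ) (hφc : HasCompactSupport φ)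
    (hφΩ : tsupport φ ⊆ Ω) (hφ0 : ∀ x, 0 ≤ φ x) :
    ∫ x, ∑ i, fderiv ℝ φ x (EuclideanSpace.single i 1) * fderiv ℝ v x (EuclideanSpace.single i 1)
      ≤ 0 := by
  have hdv : ∀ i, ContDiffOn ℝ 1 (fun y => fderiv ℝ v y (EuclideanSpace.single i 1)) Ω :=
    fun i => (hv.fderiv_of_isOpen hΩ (by norm_num)).clm_apply contDiffOn_const
  have hlap : 0 ≤ ∫ x, φ x * lap v x := integral_nonneg fun x => by
    by_cases hx : x ∈ Ω
    · exact mul_nonneg (hφ0 x) (hsub x hx)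
    · simp [image_eq_zero_of_notMem_tsupport fun h => hx (hφΩ h)]
  simp only [lap, Finset.mul_sum] at hlap
  rw [integral_finsetSum _ fun i _ => integrable_mul_of_tsupport_subset hΩ hφ.continuous hφc hφΩ
    (((hdv i).continuousOn_fderiv_of_isOpen hΩ le_rfl).clm_apply continuousOn_const)] at hlap
  simp only [integral_mul_fderiv_eq_neg_fderiv_mul_of_tsupport_subset hΩ hφ hφc hφΩ (hdv _),
    Finset.sum_neg_distrib] at hlap
  rw [integral_finsetSum _ fun i _ =>
    integrable_fderiv_apply_mul_of_tsupport_subset hΩ hφ hφc hφΩ (hdv i).continuousOn _]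
  linarith

theorem integral_sq_mul_norm_fderiv_div_sq_le (hΩ : IsOpen Ω) (hv : ContDiffOn ℝ 2 v Ω)
    (hneg : ∀ x ∈ Ω, v x < 0) (hsub : ∀ x ∈ Ω, 0 ≤ lap v x) (hζ : ContDiff ℝ 1 ζ)
    (hζc : HasCompactSupport ζ) (hζΩ : tsupport ζ ⊆ Ω) :
    ∫ x, ζ x ^ 2 * (‖fderiv ℝ v x‖ ^ 2 / v x ^ 2) ≤ 4 * ∫ x, ‖fderiv ℝ ζ x‖ ^ 2 := by
  set φ := fun y => ζ y ^ 2 * (-v y)⁻¹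
  have hv1 : ContDiffOn ℝ 1 v Ω := hv.of_le one_le_two
  have hφζ : tsupport φ ⊆ tsupport ζ := tsupport_sq_mul_subset ζ _
  have hφΩ := hφζ.trans hζΩ
  have hφc : HasCompactSupport φ := hζc.of_isClosed_subset (isClosed_tsupport _) hφζ
  have hφ : ContDiff ℝ 1 φ :=
    ((hζ.contDiffOn.pow 2).mul (hv1.neg.inv fun x hx => (neg_pos.2 (hneg x hx)).ne'))
      |>.contDiff_of_tsupport_subset hΩ hφΩ
  have hφ0 : ∀ x, 0 ≤ φ x := fun x => by
    by_cases hx : x ∈ Ω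
    · exact mul_nonneg (sq_nonneg _) (inv_nonneg.2 (neg_nonneg.2 (hneg x hx).le))
    · simp [φ, image_eq_zero_of_notMem_tsupport fun h => hx (hζΩ h)]
  have hpt : ∀ x, ζ x ^ 2 * (‖fderiv ℝ v x‖ ^ 2 / v x ^ 2) / 2 - 2 * ‖fderiv ℝ ζ x‖ ^ 2 ≤
      ∑ i, fderiv ℝ φ x (EuclideanSpace.single i 1) * fderiv ℝ v x (EuclideanSpace.single i 1) := by
    intro x
    by_cases hx : x ∈ Ω
    · exact le_sum_fderiv_sq_mul_inv_neg_mul_fderiv (hζ.differentiable one_ne_zero x)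
        ((hv1.differentiableOn one_ne_zero x hx).differentiableAt (hΩ.mem_nhds hx))
        (hneg x hx).ne
    · have hxζ : x ∉ tsupport ζ := fun h => hx (hζΩ h)
      simp [image_eq_zero_of_notMem_tsupport hxζ, fderiv_of_notMem_tsupport ℝ hxζ,
        fderiv_of_notMem_tsupport ℝ fun h => hxζ (hφζ h)]
  have hP := integrable_sq_mul_norm_fderiv_div_sq (μ := volume) hΩ hζ.continuous hζc hζΩ hv1
    fun x hx => (hneg x hx).ne
  have hG : Integrable fun x => ‖fderiv ℝ ζ x‖ ^ 2 := integrable_norm_fderiv_sq hζ hζc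
  have hflux : Integrable fun x =>
      ∑ i, fderiv ℝ φ x (EuclideanSpace.single i 1) * fderiv ℝ v x (EuclideanSpace.single i 1) :=
    integrable_finsetSum _ fun i _ => integrable_fderiv_apply_mul_of_tsupport_subset hΩ hφ hφc
      hφΩ ((hv1.continuousOn_fderiv_of_isOpen hΩ le_rfl).clm_apply continuousOn_const) _
  have hmono := integral_mono ((hP.div_const 2).sub (hG.const_mul 2)) hflux hpt
  simp only [Pi.sub_apply] at hmono
  rw [integral_sub (hP.div_const 2) (hG.const_mul 2), integral_div, integral_const_mul] at hmono
  linarith [integral_sum_fderiv_mul_fderiv_nonpos hΩ hv hsub hφ hφc hφΩ hφ0]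

end Subharmonic

theorem stmt_5 (N : ℕ) :
    ∃ c : ℝ, 0 < c ∧
      ∀ (Ω : Set (EuclideanSpace ℝ (Fin N))), IsOpen Ω →
        ∀ v : EuclideanSpace ℝ (Fin N) → ℝ, ContDiffOn ℝ 2 v Ω →
          (∀ x ∈ Ω, v x < 0) → (∀ x ∈ Ω, 0 ≤ lap v x) →
          ∀ (z : EuclideanSpace ℝ (Fin N)) (r : ℝ), 0 < r →
            Metric.closedBall z r ⊆ Ω →
            ∫ x in Metric.ball z (r / 2), ‖gradient v x‖ ^ 2 / (v x) ^ 2 ≤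
              c * r ^ ((N : ℝ) - 2) := by
  obtain ⟨C, hC, hcutoff⟩ :=
    exists_integral_norm_fderiv_cutoff_sq_le (volume : Measure (EuclideanSpace ℝ (Fin N)))
  refine ⟨4 * C, by positivity, fun Ω hΩ v hv hneg hsub z r hr hball => ?_⟩
  have hζΩ : tsupport (cutoff z r) ⊆ Ω :=
    (tsupport_cutoff_subset hr).trans ((closedBall_subset_closedBall (by linarith)).trans hball)
  have hint := integrable_sq_mul_norm_fderiv_div_sq (μ := volume) hΩ
    (contDiff_cutoff (n := 1)).continuous (hasCompactSupport_cutoff hr) hζΩ (hv.of_le one_le_two)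
    fun x hx => (hneg x hx).ne
  calc ∫ x in ball z (r / 2), ‖gradient v x‖ ^ 2 / v x ^ 2
      = ∫ x in ball z (r / 2), cutoff z r x ^ 2 * (‖fderiv ℝ v x‖ ^ 2 / v x ^ 2) :=
        setIntegral_congr_fun measurableSet_ball fun x hx => by
          rw [cutoff_of_dist_le hr (mem_ball.1 hx).le, norm_gradient, one_pow, one_mul]
    _ ≤ ∫ x, cutoff z r x ^ 2 * (‖fderiv ℝ v x‖ ^ 2 / v x ^ 2) :=
        setIntegral_le_integral hint (ae_of_all _ fun x => by positivity)
    _ ≤ 4 * ∫ x, ‖fderiv ℝ (cutoff z r) x‖ ^ 2 :=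
        integral_sq_mul_norm_fderiv_div_sq_le hΩ hv hneg hsub contDiff_cutoff
          (hasCompactSupport_cutoff hr) hζΩ
    _ ≤ 4 * C * r ^ ((N : ℝ) - 2) := by
        rw [mul_assoc]
        gcongr
        simpa using hcutoff z r hr
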